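/- arXiv:1906.11558 — 3 statements merged into one kernel-verified Lean document; each statement's English description precedes it below -/
import Mathlib

section
/- Every D-degenerate graph G on n vertices contains an integer d with 0 ≤ d ≤ 2D and an independent set I ⊆ V(G) with |I| ≥ n/(2D+1)^3 such that every vertex of I has degree exactly d in G. -/
/-!
Degeneracy bounds the number of edges by `D n`, so the average degree is at most `2D` and, by
Markov's inequality, at least `n / (2D+1)` vertices have degree at most `2D`. Pigeonholing these
over the `2D+1` possible degrees gives `n / (2D+1)²` vertices of one common degree `d`, and the
greedy algorithm (take a vertex of degree at most `D` in what is left, discard its neighbours)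
finds an independent set among them of size at least a `1/(D+1)` fraction of them.
-/

open Finset

theorem Finset.exists_card_le_card_mul_card_fiber {α β : Type*} [DecidableEq β] {s : Finset α}
    {t : Finset β} {f : α → β} (hf : ∀ a ∈ s, f a ∈ t) (ht : t.Nonempty) :
    ∃ y ∈ t, #s ≤ #t * #{a ∈ s | f a = y} := by
  have hpos : (0 : ℚ) < #t := by exact_mod_cast ht.card_pos
  obtain ⟨y, hy, hfib⟩ := exists_le_card_fiber_of_nsmul_le_card_of_maps_to hf ht
    (b := (#s : ℚ) / #t) (by rw [nsmul_eq_mul, mul_div_cancel₀ _ hpos.ne'])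
  refine ⟨y, hy, ?_⟩
  rw [div_le_iff₀' hpos] at hfib
  exact_mod_cast hfib

theorem Finset.card_le_mul_card_filter_le_of_sum_le {ι : Type*} {s : Finset ι} {f : ι → ℕ}
    {c : ℕ} (h : ∑ i ∈ s, f i ≤ c * #s) : #s ≤ (c + 1) * #{i ∈ s | f i ≤ c} := by
  have hsplit := card_filter_add_card_filter_not (s := s) (fun i => f i ≤ c)
  have hlarge : (c + 1) * #{i ∈ s | ¬f i ≤ c} ≤ ∑ i ∈ s, f i := calc
    _ ≤ ∑ i ∈ s with ¬f i ≤ c, f i := by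
      rw [mul_comm, ← smul_eq_mul]
      exact card_nsmul_le_sum _ _ _ fun i hi => not_le.mp (mem_filter.mp hi).2
    _ ≤ ∑ i ∈ s, f i := sum_le_sum_of_subset (filter_subset _ _)
  nlinarith

namespace SimpleGraph

variable {V : Type*} (G : SimpleGraph V) [DecidableRel G.Adj] {D : ℕ}

def IsDegenerate (D : ℕ) : Prop :=
  ∀ s : Finset V, s.Nonempty → ∃ v ∈ s, #{w ∈ s | G.Adj v w} ≤ D

variable {G} [DecidableEq V]

theorem sum_card_filter_adj_eq_of_mem {s : Finset V} {v : V} (hv : v ∈ s) :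
    ∑ w ∈ s, #{u ∈ s | G.Adj w u} =
      ∑ w ∈ s.erase v, #{u ∈ s.erase v | G.Adj w u} + 2 * #{u ∈ s | G.Adj v u} := by
  have hback : #{w ∈ s.erase v | G.Adj w v} = #{u ∈ s | G.Adj v u} := by
    congr 1
    ext w
    simp only [mem_filter, mem_erase]
    exact ⟨fun h => ⟨h.1.2, h.2.symm⟩, fun h => ⟨⟨(G.ne_of_adj h.2).symm, h.1⟩, h.2.symm⟩⟩
  have hsplit : ∀ w ∈ s.erase v, #{u ∈ s | G.Adj w u} =
      #{u ∈ s.erase v | G.Adj w u} + if G.Adj w v then 1 else 0 := by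
    intro w _
    rw [← insert_erase hv, filter_insert, erase_insert (notMem_erase v s)]
    split_ifs with h
    · exact card_insert_of_notMem (by simp)
    · rfl
  rw [← add_sum_erase s _ hv, sum_congr rfl hsplit, sum_add_distrib, sum_boole, hback]
  simp only [Nat.cast_id]
  ring

theorem IsDegenerate.sum_card_filter_adj_le (hG : G.IsDegenerate D) (s : Finset V) :
    ∑ v ∈ s, #{w ∈ s | G.Adj v w} ≤ 2 * D * #s := by
  induction s using Finset.strongInduction with
  | H s ih =>
  rcases s.eq_empty_or_nonempty with rfl | hne
  · simp
  obtain ⟨v, hv, hvD⟩ := hG s hne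
  have herase := ih (s.erase v) (erase_ssubset hv)
  rw [sum_card_filter_adj_eq_of_mem hv, ← card_erase_add_one hv]
  calc _ ≤ 2 * D * #(s.erase v) + 2 * D := by gcongr
    _ = 2 * D * (#(s.erase v) + 1) := by ring

theorem IsDegenerate.exists_isIndepSet (hG : G.IsDegenerate D) (s : Finset V) :
    ∃ I ⊆ s, G.IsIndepSet I ∧ #s ≤ (D + 1) * #I := by
  induction s using Finset.strongInduction with
  | H s ih =>
  rcases s.eq_empty_or_nonempty with rfl | hne
  · exact ⟨∅, subset_refl _, by simp, by simp⟩
  obtain ⟨v, hv, hvD⟩ := hG s hne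
  set t := s \ insert v {w ∈ s | G.Adj v w}
  have hts : t ⊆ s := sdiff_subset
  have hvt : v ∉ t := by simp [t]
  obtain ⟨I, hIt, hI, hcard⟩ := ih t ((ssubset_iff_of_subset hts).mpr ⟨v, hv, hvt⟩)
  have hvI : v ∉ I := fun h => hvt (hIt h)
  refine ⟨insert v I, insert_subset hv (hIt.trans hts), ?_, ?_⟩
  · have hnadj : ∀ w ∈ I, ¬G.Adj v w := fun w hw hadj => by
      have hwt := mem_sdiff.mp (hIt hw)
      exact hwt.2 (mem_insert_of_mem (mem_filter.mpr ⟨hwt.1, hadj⟩))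
    rw [coe_insert, isIndepSet_iff, Set.pairwise_insert]
    exact ⟨hI, fun w hw _ => ⟨hnadj w hw, fun hadj => hnadj w hw hadj.symm⟩⟩
  · have hst : #s ≤ #t + (D + 1) := calc
      #s ≤ #t + #(insert v {w ∈ s | G.Adj v w}) := card_le_card_sdiff_add_card
      _ ≤ #t + (#{w ∈ s | G.Adj v w} + 1) := by gcongr; exact card_insert_le _ _
      _ ≤ #t + (D + 1) := by gcongr
    rw [card_insert_of_notMem hvI]
    linarith

theorem IsDegenerate.card_le_mul_card_filter_degree_le [Fintype V] (hG : G.IsDegenerate D) :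
    Fintype.card V ≤ (2 * D + 1) * #{v | G.degree v ≤ 2 * D} := by
  have hsum : ∑ v, G.degree v ≤ 2 * D * #(univ : Finset V) := by
    simpa only [degree, neighborFinset_eq_filter] using hG.sum_card_filter_adj_le univ
  exact card_univ (α := V) ▸ card_le_mul_card_filter_le_of_sum_le hsum

end SimpleGraph

/-- Every `D`-degenerate graph on `n` vertices contains an integer `0 ≤ d ≤ 2D` and an
independent set `I` of size at least `n / (2D+1)³` all of whose vertices have degree
exactly `d`.  `D`-degeneracy is expressed as: every (induced) subgraph has a vertex of
degree at most `D` within it. -/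
theorem degenerate_large_independent_same_degree (D n : ℕ) (G : SimpleGraph (Fin n))
    (hdeg : ∀ s : Finset (Fin n), s.Nonempty →
      ∃ v ∈ s, ({w : Fin n | w ∈ s ∧ G.Adj v w}).ncard ≤ D) :
    ∃ d ≤ 2 * D, ∃ I : Finset (Fin n),
      (n : ℝ) / (2 * (D : ℝ) + 1) ^ 3 ≤ (I.card : ℝ) ∧
      (∀ v ∈ I, ∀ w ∈ I, ¬ G.Adj v w) ∧
      (∀ v ∈ I, (G.neighborSet v).ncard = d) := by
  classical
  have hG : SimpleGraph.IsDegenerate G D := fun s hs => by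
    obtain ⟨v, hv, hvD⟩ := hdeg s hs
    exact ⟨v, hv, by simpa [← Set.ncard_coe_finset] using hvD⟩
  set T : Finset (Fin n) := {v | G.degree v ≤ 2 * D}
  have hT : n ≤ (2 * D + 1) * #T := by simpa using hG.card_le_mul_card_filter_degree_le
  obtain ⟨d, hd, hS⟩ := exists_card_le_card_mul_card_fiber (s := T) (t := range (2 * D + 1))
    (f := fun v => G.degree v) (fun v hv => mem_range_succ_iff.mpr (mem_filter.mp hv).2)
    (nonempty_range_iff.mpr (Nat.succ_ne_zero _))
  rw [card_range] at hS
  obtain ⟨I, hIS, hI, hIcard⟩ := hG.exists_isIndepSet {v ∈ T | G.degree v = d}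
  have hn : n ≤ (2 * D + 1) ^ 3 * #I := calc
    n ≤ (2 * D + 1) * ((2 * D + 1) * ((D + 1) * #I)) :=
      hT.trans (Nat.mul_le_mul_left _ (hS.trans (Nat.mul_le_mul_left _ hIcard)))
    _ ≤ (2 * D + 1) * ((2 * D + 1) * ((2 * D + 1) * #I)) := by gcongr; omega
    _ = (2 * D + 1) ^ 3 * #I := by ring
  refine ⟨d, mem_range_succ_iff.mp hd, I, ?_,
    fun v hv w hw hadj => hI hv hw (G.ne_of_adj hadj) hadj, fun v hv => ?_⟩
  · rw [div_le_iff₀ (by positivity)]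
    exact_mod_cast (mul_comm _ (#I)) ▸ hn
  · rw [← (mem_filter.mp (hIS hv)).2, ← SimpleGraph.card_neighborSet_eq_degree,
      Set.ncard_eq_toFinset_card', Set.toFinset_card]
end

section
/- Let Ω be a finite probability space with filtration F_0,...,F_n, let R > 0, and for each i let Y_i be an F_i-measurable nonnegative random variable with Y_i ≤ R. Let μ̃ > 0 and let E be an event such that on E we have Σ_{i=1}^n E[Y_i | F_{i-1}] ≤ μ̃. Then P[E and Σ_{i=1}^n Y_i > 2μ̃] ≤ exp(-μ̃/(4R)). -/
/-!
With `c = 1 / (2R)`, the bound `exp t ≤ 1 + 3t/2` on `[0, 1/2]` gives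
`E[exp (c Yᵢ) | Fᵢ₋₁] ≤ exp ((3/2) c E[Yᵢ | Fᵢ₋₁])`, so
`exp (c ∑ Yᵢ - (3/2) c ∑ E[Yᵢ | Fᵢ₋₁])` is a supermartingale started at `1`.
On `E ∩ {∑ Yᵢ > 2μ̃}` its exponent is at least `2cμ̃ - (3/2)cμ̃ = μ̃/(4R)`,
and Markov's inequality concludes.
-/

open MeasureTheory ProbabilityTheory Real Finset

lemma Real.exp_le_one_add_three_halves_mul {t : ℝ} (h0 : 0 ≤ t) (h1 : t ≤ 1 / 2) :
    exp t ≤ 1 + 3 / 2 * t := by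
  have h := Real.exp_bound' h0 (h1.trans (by norm_num)) (n := 2) two_pos
  norm_num [Finset.sum_range_succ, Nat.factorial] at h
  nlinarith

lemma Real.exp_one_div_two_mul_le {R y : ℝ} (hR : 0 < R) (hy0 : 0 ≤ y) (hyR : y ≤ R) :
    exp (1 / (2 * R) * y) ≤ 1 + 3 / 2 * (1 / (2 * R)) * y := by
  have hy : 1 / (2 * R) * y ≤ 1 / 2 := by
    rw [div_mul_eq_mul_div, one_mul, div_le_iff₀ (by positivity)]
    linarith
  simpa [mul_assoc] using exp_le_one_add_three_halves_mul (by positivity) hy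

section

variable {Ω : Type*} {m0 : MeasurableSpace Ω} {μ : Measure Ω}

lemma MeasureTheory.Integrable.of_nonneg_of_le [IsFiniteMeasure μ] {f : Ω → ℝ} {R : ℝ}
    (hf : AEStronglyMeasurable f μ)
    (hbdd : ∀ ω, 0 ≤ f ω ∧ f ω ≤ R) : Integrable f μ :=
  .of_bound hf R (ae_of_all _ fun ω => by simpa [abs_of_nonneg (hbdd ω).1] using (hbdd ω).2)

lemma condExp_le_exp_mul_condExp {m : MeasurableSpace Ω} [IsFiniteMeasure μ] (hm : m ≤ m0)
    {f Y : Ω → ℝ} {a : ℝ} (hf : Integrable f μ) (hY : Integrable Y μ)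
    (hfY : ∀ ω, f ω ≤ 1 + a * Y ω) :
    μ[f|m] ≤ᵐ[μ] fun ω => exp (a * μ[Y|m] ω) := by
  have hlin : μ[(fun _ => 1) + a • Y|m] =ᵐ[μ] fun ω => 1 + a * μ[Y|m] ω := by
    filter_upwards [condExp_add (integrable_const 1) (hY.smul a) m, condExp_smul (m := m) a Y]
      with ω hadd hsmul
    simp [hadd, hsmul, condExp_const hm]
  filter_upwards [condExp_mono (m := m) hf ((integrable_const 1).add (hY.smul a)) (ae_of_all _ hfY),
    hlin] with ω hmono hω
  linarith [Real.add_one_le_exp (a * μ[Y|m] ω)]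

lemma integral_mul_le_integral_mul_of_condExp_le {m : MeasurableSpace Ω} (hm : m ≤ m0)
    [SigmaFinite (μ.trim hm)] {W f h : Ω → ℝ} (hW : StronglyMeasurable[m] W) (hW0 : 0 ≤ W)
    (hWf : Integrable (W * f) μ) (hf : Integrable f μ) (hWh : Integrable (W * h) μ)
    (hfh : μ[f|m] ≤ᵐ[μ] h) : ∫ ω, (W * f) ω ∂μ ≤ ∫ ω, (W * h) ω ∂μ := by
  have hpull : μ[W * f|m] =ᵐ[μ] W * μ[f|m] := condExp_mul_of_stronglyMeasurable_left hW hWf hf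
  calc ∫ ω, (W * f) ω ∂μ = ∫ ω, μ[W * f|m] ω ∂μ := (integral_condExp hm).symm
    _ ≤ ∫ ω, (W * h) ω ∂μ := integral_mono_ae integrable_condExp hWh <| by
        filter_upwards [hpull, hfh] with ω hω hfhω
        rw [hω]
        exact mul_le_mul_of_nonneg_left hfhω (hW0 ω)

lemma measure_le_exp_neg_of_integral_exp_le_one [IsFiniteMeasure μ] {X : Ω → ℝ}
    (hX : Integrable (fun ω => exp (X ω)) μ) (h : ∫ ω, exp (X ω) ∂μ ≤ 1) (t : ℝ) :
    μ {ω | t ≤ X ω} ≤ ENNReal.ofReal (exp (-t)) := by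
  have hchernoff := measure_ge_le_exp_mul_mgf t zero_le_one (by simpa using hX)
  rw [← ofReal_measureReal]
  refine ENNReal.ofReal_le_ofReal (hchernoff.trans ?_)
  simpa [mgf] using mul_le_mul_of_nonneg_left h (exp_pos (-t)).le

noncomputable def compensatedSum (μ : Measure Ω) (F : Filtration ℕ m0) (c a : ℝ)
    (Y : ℕ → Ω → ℝ) (k : ℕ) (ω : Ω) : ℝ :=
  ∑ i ∈ Icc 1 k, (c * Y i ω - a * μ[Y i|F (i - 1)] ω)

variable {F : Filtration ℕ m0} {c a R : ℝ} {Y : ℕ → Ω → ℝ}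

@[simp]
lemma compensatedSum_zero : compensatedSum μ F c a Y 0 = 0 := by
  ext ω
  simp [compensatedSum]

lemma compensatedSum_succ (k : ℕ) (ω : Ω) :
    compensatedSum μ F c a Y (k + 1) ω
      = compensatedSum μ F c a Y k ω + (c * Y (k + 1) ω - a * μ[Y (k + 1)|F k] ω) := by
  rw [compensatedSum, compensatedSum, sum_Icc_succ_top (Nat.le_add_left 1 k), Nat.add_sub_cancel]

lemma compensatedSum_eq (k : ℕ) (ω : Ω) :
    compensatedSum μ F c a Y k ω
      = c * ∑ i ∈ Icc 1 k, Y i ω - a * ∑ i ∈ Icc 1 k, μ[Y i|F (i - 1)] ω := by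
  rw [compensatedSum, sum_sub_distrib, mul_sum, mul_sum]

lemma stronglyMeasurable_compensatedSum {n : ℕ}
    (hmeas : ∀ i ∈ Icc 1 n, Measurable[F i] (Y i)) :
    StronglyMeasurable[F n] (compensatedSum μ F c a Y n) := by
  refine Finset.stronglyMeasurable_fun_sum _ fun i hi => ?_
  have hin : i ≤ n := (mem_Icc.mp hi).2
  have hY : StronglyMeasurable[F n] (Y i) :=
    ((hmeas i hi).mono (F.mono hin) le_rfl).stronglyMeasurable
  exact (hY.const_mul c).sub
    ((stronglyMeasurable_condExp.mono (F.mono (Nat.sub_le i 1 |>.trans hin))).const_mul a)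

variable {n : ℕ}
    (hmeas : ∀ i ∈ Icc 1 n, Measurable[F i] (Y i))
    (hbdd : ∀ i ∈ Icc 1 n, ∀ ω, 0 ≤ Y i ω ∧ Y i ω ≤ R) (ha : 0 ≤ a)
    (hexp : ∀ i ∈ Icc 1 n, ∀ ω, exp (c * Y i ω) ≤ 1 + a * Y i ω)

include hmeas hbdd ha hexp in
lemma integrable_exp_compensatedSum [IsFiniteMeasure μ] :
    Integrable (fun ω => exp (compensatedSum μ F c a Y n ω)) μ := by
  induction n with
  | zero => simp
  | succ n ih =>
    have hn : n + 1 ∈ Icc 1 (n + 1) := by simp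
    have hYm : Measurable (Y (n + 1)) := (hmeas _ hn).mono (F.le _) le_rfl
    have hcond : 0 ≤ᵐ[μ] μ[Y (n + 1)|F n] :=
      condExp_nonneg (ae_of_all _ fun ω => (hbdd _ hn ω).1)
    have hsub : Icc 1 n ⊆ Icc 1 (n + 1) := Icc_subset_Icc_right n.le_succ
    simp_rw [compensatedSum_succ, exp_add]
    refine (ih (fun i hi => hmeas i (hsub hi)) (fun i hi => hbdd i (hsub hi))
      (fun i hi => hexp i (hsub hi))).mul_bdd (c := 1 + a * R) ?_ ?_
    · exact (measurable_exp.comp ((hYm.const_mul c).sub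
        ((stronglyMeasurable_condExp.mono (F.le n)).measurable.const_mul a))).aestronglyMeasurable
    · filter_upwards [hcond] with ω hω
      rw [norm_of_nonneg (exp_pos _).le]
      calc exp (c * Y (n + 1) ω - a * μ[Y (n + 1)|F n] ω) ≤ exp (c * Y (n + 1) ω) :=
            exp_le_exp.mpr (by linarith [mul_nonneg ha hω])
        _ ≤ 1 + a * R := (hexp _ hn ω).trans (by nlinarith [(hbdd _ hn ω).2])

include hmeas hbdd ha hexp in
lemma integral_exp_compensatedSum_le_one [IsProbabilityMeasure μ] :
    ∫ ω, exp (compensatedSum μ F c a Y n ω) ∂μ ≤ 1 := by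
  induction n with
  | zero => simp
  | succ n ih =>
    have hn : n + 1 ∈ Icc 1 (n + 1) := by simp
    have hsub : Icc 1 n ⊆ Icc 1 (n + 1) := Icc_subset_Icc_right n.le_succ
    have hmeas' : ∀ i ∈ Icc 1 n, Measurable[F i] (Y i) := fun i hi => hmeas i (hsub hi)
    have hbdd' : ∀ i ∈ Icc 1 n, ∀ ω, 0 ≤ Y i ω ∧ Y i ω ≤ R :=
      fun i hi => hbdd i (hsub hi)
    have hexp' : ∀ i ∈ Icc 1 n, ∀ ω, exp (c * Y i ω) ≤ 1 + a * Y i ω :=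
      fun i hi => hexp i (hsub hi)
    have hYm : Measurable (Y (n + 1)) := (hmeas _ hn).mono (F.le _) le_rfl
    set g := μ[Y (n + 1)|F n]
    set W : Ω → ℝ := fun ω => exp (compensatedSum μ F c a Y n ω - a * g ω)
    set e : Ω → ℝ := fun ω => exp (c * Y (n + 1) ω)
    have hsplit : (fun ω => exp (compensatedSum μ F c a Y (n + 1) ω)) = W * e := by
      ext ω
      simp only [compensatedSum_succ, Pi.mul_apply, W, e, ← exp_add]
      congr 1
      ring
    have hmerge :
        W * (fun ω => exp (a * g ω)) = fun ω => exp (compensatedSum μ F c a Y n ω) := by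
      ext ω
      simp only [Pi.mul_apply, W, ← exp_add, sub_add_cancel]
    have hWm : StronglyMeasurable[F n] W :=
      continuous_exp.comp_stronglyMeasurable
        ((stronglyMeasurable_compensatedSum hmeas').sub (stronglyMeasurable_condExp.const_mul a))
    have he : Integrable e μ :=
      .of_nonneg_of_le (R := 1 + a * R) (measurable_exp.comp (hYm.const_mul c)).aestronglyMeasurable
        fun ω => ⟨(exp_pos _).le, (hexp _ hn ω).trans (by nlinarith [(hbdd _ hn ω).2])⟩
    have hY : Integrable (Y (n + 1)) μ := .of_nonneg_of_le hYm.aestronglyMeasurable (hbdd _ hn)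
    calc ∫ ω, exp (compensatedSum μ F c a Y (n + 1) ω) ∂μ
      _ = ∫ ω, (W * e) ω ∂μ := by rw [hsplit]
      _ ≤ ∫ ω, (W * fun ω => exp (a * g ω)) ω ∂μ :=
        integral_mul_le_integral_mul_of_condExp_le (F.le n) hWm (fun ω => (exp_pos _).le)
          (hsplit ▸ integrable_exp_compensatedSum hmeas hbdd ha hexp) he
          (hmerge ▸ integrable_exp_compensatedSum hmeas' hbdd' ha hexp')
          (condExp_le_exp_mul_condExp (F.le n) he hY (hexp _ hn))
      _ = ∫ ω, exp (compensatedSum μ F c a Y n ω) ∂μ := by rw [hmerge]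
      _ ≤ 1 := ih hmeas' hbdd' hexp'

end

theorem freedman_upper_tail_general {Ω : Type*} [m0 : MeasurableSpace Ω]
    (μ : Measure Ω) [IsProbabilityMeasure μ]
    (n : ℕ) (F : Filtration ℕ m0)
    (R : ℝ) (hR : 0 < R)
    (Y : ℕ → Ω → ℝ)
    (hmeas : ∀ i ∈ Finset.Icc 1 n, Measurable[F i] (Y i))
    (hbdd : ∀ i ∈ Finset.Icc 1 n, ∀ ω, 0 ≤ Y i ω ∧ Y i ω ≤ R)
    (μt : ℝ)
    (E : Set Ω)
    (hE : ∀ᵐ ω ∂μ, ω ∈ E → ∑ i ∈ Finset.Icc 1 n, (μ[Y i | F (i - 1)]) ω ≤ μt) :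
    μ (E ∩ {ω | 2 * μt < ∑ i ∈ Finset.Icc 1 n, Y i ω})
      ≤ ENNReal.ofReal (Real.exp (-μt / (4 * R))) := by
  set c := 1 / (2 * R)
  have hc : 0 ≤ c := by positivity
  have ha : 0 ≤ 3 / 2 * c := by positivity
  have hexp : ∀ i ∈ Icc 1 n, ∀ ω, exp (c * Y i ω) ≤ 1 + 3 / 2 * c * Y i ω :=
    fun i hi ω => exp_one_div_two_mul_le hR (hbdd i hi ω).1 (hbdd i hi ω).2
  have hsub : (E ∩ {ω | 2 * μt < ∑ i ∈ Icc 1 n, Y i ω} : Set Ω)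
      ≤ᵐ[μ] {ω | μt / (4 * R) ≤ compensatedSum μ F c (3 / 2 * c) Y n ω} := by
    filter_upwards [hE] with ω hω ⟨hωE, hω2⟩
    have hc4 : μt / (4 * R) = c * (2 * μt) - 3 / 2 * c * μt := by
      simp only [c]
      field_simp
      ring
    show _ ≤ _
    rw [compensatedSum_eq, hc4]
    linarith [mul_le_mul_of_nonneg_left hω2.le hc, mul_le_mul_of_nonneg_left (hω hωE) ha]
  calc μ (E ∩ {ω | 2 * μt < ∑ i ∈ Icc 1 n, Y i ω})
      ≤ μ {ω | μt / (4 * R) ≤ compensatedSum μ F c (3 / 2 * c) Y n ω} :=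
        measure_mono_ae hsub
    _ ≤ ENNReal.ofReal (exp (-(μt / (4 * R)))) :=
      measure_le_exp_neg_of_integral_exp_le_one
        (integrable_exp_compensatedSum hmeas hbdd ha hexp)
        (integral_exp_compensatedSum_le_one (μ := μ) hmeas hbdd ha hexp) _
    _ = ENNReal.ofReal (exp (-μt / (4 * R))) := by rw [neg_div]

/-- Freedman-type upper tail bound on a good event: on a finite probability space with a
filtration `F`, if `Y i` is `F i`-measurable with `0 ≤ Y i ≤ R`, and on an event `E` the
sum of conditional expectations `∑_{i=1}^n E[Y i | F (i-1)]` is at most `μ̃ > 0`, then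
`P[E and ∑ Y i > 2 μ̃] ≤ exp (-μ̃ / (4R))`. -/
theorem freedman_upper_tail {Ω : Type*} [Fintype Ω] [m0 : MeasurableSpace Ω]
    (μ : Measure Ω) [IsProbabilityMeasure μ]
    (n : ℕ) (F : Filtration ℕ m0)
    (R : ℝ) (hR : 0 < R)
    (Y : ℕ → Ω → ℝ)
    (hmeas : ∀ i ∈ Finset.Icc 1 n, Measurable[F i] (Y i))
    (hbdd : ∀ i ∈ Finset.Icc 1 n, ∀ ω, 0 ≤ Y i ω ∧ Y i ω ≤ R)
    (μt : ℝ) (hμt : 0 < μt)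
    (E : Set Ω)
    (hE : ∀ᵐ ω ∂μ, ω ∈ E → ∑ i ∈ Finset.Icc 1 n, (μ[Y i | F (i - 1)]) ω ≤ μt) :
    μ (E ∩ {ω | 2 * μt < ∑ i ∈ Finset.Icc 1 n, Y i ω})
      ≤ ENNReal.ofReal (Real.exp (-μt / (4 * R))) :=
  freedman_upper_tail_general (m0 := m0) μ n F R hR Y hmeas hbdd μt E hE
end

section
/- Let Ω be a finite probability space with filtration F_0,...,F_n, let R > 0, and for each i let Y_i be an F_i-measurable random variable with 0 ≤ Y_i ≤ R. Suppose on an event E we have Σ_{i=1}^n E[Y_i|F_{i-1}] = μ̃ ± ν̃. Then for every ρ̃ > 0, P[E and Σ_{i=1}^n Y_i ≠ μ̃ ± (ν̃ + ρ̃)] ≤ 2 exp(-ρ̃²/(2R(μ̃ + ν̃ + ρ̃))). -/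
open MeasureTheory Real

/-!
For every `l`, with `c l = (exp (l R) - 1) / R`, the process
`exp (l ∑ Y i - c l ∑ E[Y i | F (i - 1)])` is a supermartingale: by convexity
`exp (l y) ≤ 1 + c l y` on `[0, R]`, so
`E[exp (l Y i) | F (i - 1)] ≤ 1 + c l E[Y i | F (i - 1)] ≤ exp (c l E[Y i | F (i - 1)])`.
Its expectation is therefore at most `1`, and Markov's inequality bounds each tail.
With `a = μ̃ + ν̃` and `l R = ± ρ̃ / (a + ρ̃)`, the estimate
`exp t - 1 - t ≤ t² / 2 + 2 / 9 |t|³` for `|t| ≤ 1` makes the exponent at least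
`ρ̃² / (2 R (a + ρ̃))` on the deviation event.
-/

lemma exp_mul_le_one_add_mul_of_mem_Icc {R l y : ℝ} (hR : 0 < R) (hy0 : 0 ≤ y) (hyR : y ≤ R) :
    exp (l * y) ≤ 1 + (exp (l * R) - 1) / R * y := by
  have hweight : y / R ≤ 1 := (div_le_one hR).2 hyR
  have h := convexOn_exp.2 (Set.mem_univ 0) (Set.mem_univ (l * R)) (by linarith)
    (div_nonneg hy0 hR.le) (sub_add_cancel 1 (y / R))
  have hly : (1 - y / R) • (0 : ℝ) + (y / R) • (l * R) = l * y := by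
    simp only [smul_eq_mul]; field_simp; ring
  rw [hly, exp_zero, smul_eq_mul, smul_eq_mul] at h
  calc exp (l * y) ≤ _ := h
    _ = _ := by field_simp; ring

lemma exp_sub_one_sub_le_of_abs_le_one {t : ℝ} (ht : |t| ≤ 1) :
    exp t - 1 - t ≤ t ^ 2 / 2 + 2 / 9 * |t| ^ 3 := by
  have h := (abs_le.1 (Real.exp_bound ht (n := 3) (by norm_num))).2
  norm_num [Finset.sum_range_succ, Nat.factorial] at h
  linarith

lemma sq_div_le_mul_sub_exp_sub_one_mul {a ρ s A X : ℝ} (hρ : 0 < ρ) (hs : |s| = 1)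
    (hA : 0 ≤ A) (hAa : A ≤ a) (hXA : ρ < s * (X - A)) :
    ρ ^ 2 / (2 * (a + ρ)) ≤ s * (ρ / (a + ρ)) * X - (exp (s * (ρ / (a + ρ))) - 1) * A := by
  set x := ρ / (a + ρ) with hx
  have haρ : 0 < a + ρ := by linarith
  have hx0 : 0 < x := div_pos hρ haρ
  have hxρ : x * (a + ρ) = ρ := div_mul_cancel₀ ρ haρ.ne'
  have htx : |s * x| = x := by rw [abs_mul, hs, one_mul, abs_of_pos hx0]
  have hcubic := exp_sub_one_sub_le_of_abs_le_one (t := s * x)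
    (by rw [htx, hx, div_le_one haρ]; linarith)
  rw [htx, mul_pow, ← sq_abs s, hs, one_pow, one_mul] at hcubic
  have hquad : (x ^ 2 / 2 + 2 / 9 * x ^ 3) * a ≤ x * ρ / 2 := by
    nlinarith [mul_pos (mul_pos hx0 hx0) hρ, mul_pos (mul_pos (mul_pos hx0 hx0) hx0) hρ]
  have hrem : (exp (s * x) - 1 - s * x) * A ≤ x * ρ / 2 :=
    calc (exp (s * x) - 1 - s * x) * A ≤ (x ^ 2 / 2 + 2 / 9 * x ^ 3) * A :=
          mul_le_mul_of_nonneg_right hcubic hA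
      _ ≤ (x ^ 2 / 2 + 2 / 9 * x ^ 3) * a := mul_le_mul_of_nonneg_left hAa (by positivity)
      _ ≤ x * ρ / 2 := hquad
  have hlin : x * ρ ≤ s * x * (X - A) := by
    rw [mul_comm s, mul_assoc]; exact mul_le_mul_of_nonneg_left hXA.le hx0.le
  calc ρ ^ 2 / (2 * (a + ρ)) = x * ρ - x * ρ / 2 := by rw [hx]; field_simp; ring
    _ ≤ s * x * (X - A) - (exp (s * x) - 1 - s * x) * A := by linarith
    _ = s * x * X - (exp (s * x) - 1) * A := by ring

lemma MeasureTheory.Integrable.of_fintype {Ω : Type*} [Fintype Ω] [MeasurableSpace Ω]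
    {μ : Measure Ω} [IsFiniteMeasure μ] {f : Ω → ℝ} (hf : AEStronglyMeasurable f μ) :
    Integrable f μ :=
  .of_bound hf (∑ x, ‖f x‖) <| .of_forall fun ω =>
    Finset.single_le_sum (f := fun x => ‖f x‖) (fun _ _ => norm_nonneg _) (Finset.mem_univ ω)

lemma measure_le_exp_neg_of_integral_exp_le_one_s10 {Ω : Type*} [MeasurableSpace Ω]
    {μ : Measure Ω} [IsFiniteMeasure μ] {G : Ω → ℝ}
    (hint : Integrable (fun ω => exp (G ω)) μ) (hG : ∫ ω, exp (G ω) ∂μ ≤ 1)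
    {β : ℝ} {S : Set Ω} (hS : ∀ᵐ ω ∂μ, ω ∈ S → β ≤ G ω) :
    μ S ≤ ENNReal.ofReal (exp (-β)) := by
  have hchernoff := ProbabilityTheory.measure_ge_le_exp_mul_mgf (X := G) (μ := μ) β zero_le_one
    (by simpa only [one_mul] using hint)
  simp only [ProbabilityTheory.mgf, one_mul, neg_one_mul] at hchernoff
  calc μ S ≤ μ {ω | β ≤ G ω} := measure_mono_ae (hS.mono fun ω h hω => h hω)
    _ = ENNReal.ofReal (μ.real {ω | β ≤ G ω}) := (ofReal_measureReal).symm
    _ ≤ ENNReal.ofReal (exp (-β)) :=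
      ENNReal.ofReal_le_ofReal (hchernoff.trans (mul_le_of_le_one_right (exp_pos _).le hG))

lemma condExp_exp_mul_le {Ω : Type*} {m m0 : MeasurableSpace Ω} {μ : Measure Ω}
    [IsFiniteMeasure μ] (hm : m ≤ m0) {R : ℝ} (hR : 0 < R) {Z : Ω → ℝ} (hZ : Measurable Z)
    (hZ0 : ∀ ω, 0 ≤ Z ω) (hZR : ∀ ω, Z ω ≤ R) (l : ℝ) :
    μ[fun ω => exp (l * Z ω) | m]
      ≤ᵐ[μ] fun ω => exp ((exp (l * R) - 1) / R * μ[Z | m] ω) := by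
  set c := (exp (l * R) - 1) / R
  have hZint : Integrable Z μ := .of_bound hZ.aestronglyMeasurable R <| .of_forall fun ω => by
    rw [Real.norm_of_nonneg (hZ0 ω)]; exact hZR ω
  have hchord : ∀ ω, exp (l * Z ω) ≤ 1 + c * Z ω := fun ω =>
    exp_mul_le_one_add_mul_of_mem_Icc hR (hZ0 ω) (hZR ω)
  have hchord_int : Integrable ((fun _ => (1 : ℝ)) + c • Z) μ :=
    (integrable_const 1).add (hZint.smul c)
  have hexp_int : Integrable (fun ω => exp (l * Z ω)) μ :=
    hchord_int.mono' (hZ.const_mul l).exp.aestronglyMeasurable <| .of_forall fun ω => by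
      rw [Real.norm_of_nonneg (exp_pos _).le]; exact hchord ω
  have hlin : μ[(fun _ => (1 : ℝ)) + c • Z | m] =ᵐ[μ] fun ω => 1 + c * μ[Z | m] ω := by
    filter_upwards [condExp_add (integrable_const (1 : ℝ)) (hZint.smul c) m,
      condExp_smul c Z m] with ω hadd hsmul
    rw [hadd, Pi.add_apply, hsmul, condExp_const hm, Pi.smul_apply, smul_eq_mul]
  filter_upwards [condExp_mono (m := m) hexp_int hchord_int (.of_forall hchord), hlin]
    with ω hmono hlin_ω
  linarith [add_one_le_exp (c * μ[Z | m] ω)]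

lemma integral_exp_add_sub_condExp_le {Ω : Type*} [Fintype Ω] {m m0 : MeasurableSpace Ω}
    {μ : Measure Ω} [IsFiniteMeasure μ] (hm : m ≤ m0) {R : ℝ} (hR : 0 < R) {G Z : Ω → ℝ}
    (hG : StronglyMeasurable[m] G) (hZ : Measurable Z) (hZ0 : ∀ ω, 0 ≤ Z ω)
    (hZR : ∀ ω, Z ω ≤ R) (l : ℝ) :
    ∫ ω, exp (G ω + (l * Z ω - (exp (l * R) - 1) / R * μ[Z | m] ω)) ∂μ
      ≤ ∫ ω, exp (G ω) ∂μ := by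
  set c := (exp (l * R) - 1) / R
  set g := fun ω => exp (G ω - c * μ[Z | m] ω)
  have hg : StronglyMeasurable[m] g :=
    continuous_exp.comp_stronglyMeasurable (hG.sub (stronglyMeasurable_condExp.const_mul c))
  have hsplit : (fun ω => exp (G ω + (l * Z ω - c * μ[Z | m] ω)))
      = g * fun ω => exp (l * Z ω) := by
    funext ω; simp only [g, Pi.mul_apply, ← exp_add]; ring_nf
  have hint : ∀ f : Ω → ℝ, StronglyMeasurable f → Integrable f μ :=
    fun f hf => .of_fintype hf.aestronglyMeasurable
  have hg' : StronglyMeasurable g := hg.mono hm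
  have hexp : StronglyMeasurable fun ω => exp (l * Z ω) :=
    (hZ.const_mul l).exp.stronglyMeasurable
  calc ∫ ω, exp (G ω + (l * Z ω - c * μ[Z | m] ω)) ∂μ
      = ∫ ω, μ[g * fun ω => exp (l * Z ω) | m] ω ∂μ := by rw [hsplit, integral_condExp hm]
    _ = ∫ ω, g ω * μ[fun ω => exp (l * Z ω) | m] ω ∂μ :=
        integral_congr_ae (condExp_mul_of_stronglyMeasurable_left hg (hint _ (hg'.mul hexp))
          (hint _ hexp))
    _ ≤ ∫ ω, g ω * exp (c * μ[Z | m] ω) ∂μ :=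
        integral_mono_ae (hint _ (hg'.mul (stronglyMeasurable_condExp.mono hm)))
          (hint _ (hg'.mul (continuous_exp.comp_stronglyMeasurable
            ((stronglyMeasurable_condExp.mono hm).const_mul c)))) <| by
        filter_upwards [condExp_exp_mul_le hm hR hZ hZ0 hZR l] with ω h
        exact mul_le_mul_of_nonneg_left h (exp_pos _).le
    _ = ∫ ω, exp (G ω) ∂μ := by simp only [g, ← exp_add, sub_add_cancel]

section
variable {Ω : Type*} [Fintype Ω] [m0 : MeasurableSpace Ω] {μ : Measure Ω}
  [IsProbabilityMeasure μ] {F : Filtration ℕ m0} {R : ℝ} {Y : ℕ → Ω → ℝ}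

theorem integral_exp_sum_sub_sum_condExp_le_one (hR : 0 < R) (n : ℕ)
    (hmeas : ∀ i ∈ Finset.Icc 1 n, Measurable[F i] (Y i))
    (hbdd : ∀ i ∈ Finset.Icc 1 n, ∀ ω, 0 ≤ Y i ω ∧ Y i ω ≤ R) (l : ℝ) :
    ∫ ω, exp (l * ∑ i ∈ Finset.Icc 1 n, Y i ω
      - (exp (l * R) - 1) / R * ∑ i ∈ Finset.Icc 1 n, μ[Y i | F (i - 1)] ω) ∂μ ≤ 1 := by
  induction n with
  | zero => simp
  | succ n ih =>
    set c := (exp (l * R) - 1) / R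
    have hsub : Finset.Icc 1 n ⊆ Finset.Icc 1 (n + 1) := Finset.Icc_subset_Icc_right n.le_succ
    have htop : n + 1 ∈ Finset.Icc 1 (n + 1) := by simp
    have hpartial : StronglyMeasurable[F n] fun ω => l * ∑ i ∈ Finset.Icc 1 n, Y i ω
        - c * ∑ i ∈ Finset.Icc 1 n, μ[Y i | F (i - 1)] ω := by
      refine ((Finset.stronglyMeasurable_fun_sum _ fun i hi => ?_).const_mul l).sub
        ((Finset.stronglyMeasurable_fun_sum _ fun i hi => ?_).const_mul c)
      · exact ((hmeas i (hsub hi)).mono (F.mono (Finset.mem_Icc.1 hi).2)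
          le_rfl).stronglyMeasurable
      · exact stronglyMeasurable_condExp.mono
          (F.mono ((Nat.sub_le i 1).trans (Finset.mem_Icc.1 hi).2))
    calc _ = ∫ ω, exp ((l * ∑ i ∈ Finset.Icc 1 n, Y i ω
          - c * ∑ i ∈ Finset.Icc 1 n, μ[Y i | F (i - 1)] ω)
          + (l * Y (n + 1) ω - c * μ[Y (n + 1) | F n] ω)) ∂μ := by
          refine integral_congr_ae (.of_forall fun ω => ?_)
          simp only [Finset.sum_Icc_succ_top (Nat.le_add_left 1 n), Nat.add_sub_cancel]
          ring_nf
      _ ≤ _ := integral_exp_add_sub_condExp_le (F.le n) hR hpartial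
          ((hmeas _ htop).mono (F.le _) le_rfl) (fun ω => (hbdd _ htop ω).1)
          (fun ω => (hbdd _ htop ω).2) l
      _ ≤ 1 := ih (fun i hi => hmeas i (hsub hi)) (fun i hi => hbdd i (hsub hi))

theorem measure_inter_signed_deviation_le (hR : 0 < R) {n : ℕ}
    (hmeas : ∀ i ∈ Finset.Icc 1 n, Measurable[F i] (Y i))
    (hbdd : ∀ i ∈ Finset.Icc 1 n, ∀ ω, 0 ≤ Y i ω ∧ Y i ω ≤ R)
    {μt νt : ℝ} {E : Set Ω} (hE : ∀ᵐ ω ∂μ, ω ∈ E →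
      |(∑ i ∈ Finset.Icc 1 n, (μ[Y i | F (i - 1)]) ω) - μt| ≤ νt)
    {ρt s : ℝ} (hρ : 0 < ρt) (hs : |s| = 1) :
    μ (E ∩ {ω | νt + ρt < s * ((∑ i ∈ Finset.Icc 1 n, Y i ω) - μt)})
      ≤ ENNReal.ofReal (exp (-ρt ^ 2 / (2 * R * (μt + νt + ρt)))) := by
  set X := fun ω => ∑ i ∈ Finset.Icc 1 n, Y i ω
  set A := fun ω => ∑ i ∈ Finset.Icc 1 n, μ[Y i | F (i - 1)] ω
  set a := μt + νt
  set l := s * (ρt / (a + ρt)) / R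
  have hlR : l * R = s * (ρt / (a + ρt)) := div_mul_cancel₀ _ hR.ne'
  have hA_nonneg : ∀ᵐ ω ∂μ, 0 ≤ A ω := by
    have h : ∀ᵐ ω ∂μ, ∀ i ∈ Finset.Icc 1 n, 0 ≤ μ[Y i | F (i - 1)] ω :=
      (Filter.eventually_all_finset _).2 fun i hi =>
        condExp_nonneg (.of_forall fun ω => (hbdd i hi ω).1)
    filter_upwards [h] with ω hω using Finset.sum_nonneg hω
  have hG : Measurable fun ω => l * X ω - (exp (l * R) - 1) / R * A ω :=
    ((Finset.measurable_fun_sum _ fun i hi =>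
      (hmeas i hi).mono (F.le i) le_rfl).const_mul l).sub
      ((Finset.measurable_fun_sum _ fun i _ =>
        (stronglyMeasurable_condExp.mono (F.le (i - 1))).measurable).const_mul _)
  rw [neg_div]
  refine measure_le_exp_neg_of_integral_exp_le_one_s10
    (.of_fintype (measurable_exp.comp hG).aestronglyMeasurable)
    (integral_exp_sum_sub_sum_condExp_le_one hR n hmeas hbdd l) ?_
  filter_upwards [hE, hA_nonneg] with ω hEω hA ⟨hωE, hdev⟩
  have hAμ : s * (A ω - μt) ≤ νt :=
    (le_abs_self _).trans (by rw [abs_mul, hs, one_mul]; exact hEω hωE)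
  have hXA : ρt < s * (X ω - A ω) := by
    have : s * (X ω - A ω) = s * (X ω - μt) - s * (A ω - μt) := by ring
    linarith [show νt + ρt < s * (X ω - μt) from hdev]
  have key := sq_div_le_mul_sub_exp_sub_one_mul hρ hs hA
    (by linarith [(abs_le.1 (hEω hωE)).2] : A ω ≤ a) hXA
  rw [hlR]
  calc ρt ^ 2 / (2 * R * (a + ρt))
        = ρt ^ 2 / (2 * (a + ρt)) / R := by rw [div_div, mul_right_comm]
    _ ≤ (s * (ρt / (a + ρt)) * X ω - (exp (s * (ρt / (a + ρt))) - 1) * A ω) / R :=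
      div_le_div_of_nonneg_right key hR.le
    _ = l * X ω - (exp (s * (ρt / (a + ρt))) - 1) / R * A ω := by
      rw [← hlR]; field_simp

end

theorem freedman_two_sided_general {Ω : Type*} [Fintype Ω] [m0 : MeasurableSpace Ω]
    (μ : Measure Ω) [IsProbabilityMeasure μ]
    (n : ℕ) (F : Filtration ℕ m0)
    (R : ℝ) (hR : 0 < R)
    (Y : ℕ → Ω → ℝ)
    (hmeas : ∀ i ∈ Finset.Icc 1 n, Measurable[F i] (Y i))
    (hbdd : ∀ i ∈ Finset.Icc 1 n, ∀ ω, 0 ≤ Y i ω ∧ Y i ω ≤ R)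
    (μt νt : ℝ)
    (E : Set Ω)
    (hE : ∀ᵐ ω ∂μ, ω ∈ E →
      |(∑ i ∈ Finset.Icc 1 n, (μ[Y i | F (i - 1)]) ω) - μt| ≤ νt) :
    ∀ ρt : ℝ, 0 < ρt →
      μ (E ∩ {ω | νt + ρt < |(∑ i ∈ Finset.Icc 1 n, Y i ω) - μt|})
        ≤ ENNReal.ofReal (2 * Real.exp (-ρt ^ 2 / (2 * R * (μt + νt + ρt)))) := by
  intro ρt hρ
  have hsplit : E ∩ {ω | νt + ρt < |(∑ i ∈ Finset.Icc 1 n, Y i ω) - μt|}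
      ⊆ E ∩ {ω | νt + ρt < 1 * ((∑ i ∈ Finset.Icc 1 n, Y i ω) - μt)}
        ∪ E ∩ {ω | νt + ρt < -1 * ((∑ i ∈ Finset.Icc 1 n, Y i ω) - μt)} := by
    rintro ω ⟨hωE, hω : νt + ρt < |_|⟩
    rcases lt_abs.1 hω with h | h
    · exact .inl ⟨hωE, by simpa using h⟩
    · exact .inr ⟨hωE, by simpa using h⟩
  calc _ ≤ _ := (measure_mono hsplit).trans (measure_union_le _ _)
    _ ≤ _ := add_le_add (measure_inter_signed_deviation_le hR hmeas hbdd hE hρ (by simp))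
        (measure_inter_signed_deviation_le hR hmeas hbdd hE hρ (by simp))
    _ = _ := by rw [← ENNReal.ofReal_add (exp_pos _).le (exp_pos _).le, ← two_mul]

/-- Freedman-type two-sided bound on a good event: on a finite probability space with a
filtration `F`, if `Y i` is `F i`-measurable with `0 ≤ Y i ≤ R`, and on an event `E` the
sum of conditional expectations `∑_{i=1}^n E[Y i | F (i-1)]` equals `μ̃ ± ν̃`, then for
every `ρ̃ > 0`,
`P[E and ∑ Y i ≠ μ̃ ± (ν̃ + ρ̃)] ≤ 2 exp (-ρ̃² / (2R(μ̃ + ν̃ + ρ̃)))`. -/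
theorem freedman_two_sided {Ω : Type*} [Fintype Ω] [m0 : MeasurableSpace Ω]
    (μ : Measure Ω) [IsProbabilityMeasure μ]
    (n : ℕ) (F : Filtration ℕ m0)
    (R : ℝ) (hR : 0 < R)
    (Y : ℕ → Ω → ℝ)
    (hmeas : ∀ i ∈ Finset.Icc 1 n, Measurable[F i] (Y i))
    (hbdd : ∀ i ∈ Finset.Icc 1 n, ∀ ω, 0 ≤ Y i ω ∧ Y i ω ≤ R)
    (μt νt : ℝ) (hν : 0 ≤ νt)
    (E : Set Ω)
    (hE : ∀ᵐ ω ∂μ, ω ∈ E →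
      |(∑ i ∈ Finset.Icc 1 n, (μ[Y i | F (i - 1)]) ω) - μt| ≤ νt) :
    ∀ ρt : ℝ, 0 < ρt →
      μ (E ∩ {ω | νt + ρt < |(∑ i ∈ Finset.Icc 1 n, Y i ω) - μt|})
        ≤ ENNReal.ofReal (2 * Real.exp (-ρt ^ 2 / (2 * R * (μt + νt + ρt)))) :=
  freedman_two_sided_general (m0 := m0) μ n F R hR Y hmeas hbdd μt νt E hE
end
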